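/- Let S be a weakly η-sparse family of cubes in ℝ^N and let f ∈ L¹(ℝ^N; ℝ^d) be compactly supported. Then for almost every x ∈ ℝ^N the set 𝐋_S f(x) := Σ_{Q∈S} ⟨⟨f⟩⟩_Q 1_Q(x) (Minkowski sum) is a bounded convex symmetric subset of ℝ^d. -/

import Mathlib

open MeasureTheory Set Matrix
open scoped ENNReal BigOperators NNReal

noncomputable section

namespace CBD

/-- The Euclidean norm of a vector in `ℝ^n` given as a plain function. -/
def vnorm {n : ℕ} (v : Fin n → ℝ) : ℝ := Real.sqrt (∑ i, v i ^ 2)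

/-- An axis-parallel half-open cube in `ℝ^N`. -/
structure Cube (N : ℕ) where
  corner : Fin N → ℝ
  side : ℝ
  side_pos : 0 < side

namespace Cube

variable {N : ℕ}

/-- The subset of `ℝ^N` determined by the cube. -/
def set (Q : Cube N) : Set (Fin N → ℝ) :=
  {x | ∀ i, Q.corner i ≤ x i ∧ x i < Q.corner i + Q.side}

/-- The volume `|Q|` of the cube. -/
def vol (Q : Cube N) : ℝ := Q.side ^ N

/-- The concentric dilation `rQ` (intended for `r ≥ 1`; implemented with `max r 1`). -/
def dilate (Q : Cube N) (r : ℝ) : Cube N where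
  corner := fun i => Q.corner i + Q.side / 2 - max r 1 * Q.side / 2
  side := max r 1 * Q.side
  side_pos := mul_pos (lt_of_lt_of_le one_pos (le_max_right r 1)) Q.side_pos

/-- `Q` belongs to the standard dyadic lattice `D`:
`Q = 2^{-k}([0,1)^N + m)` for some `k ∈ ℤ`, `m ∈ ℤ^N`. -/
def IsDyadic (Q : Cube N) : Prop :=
  ∃ (k : ℤ) (m : Fin N → ℤ), Q.side = (2:ℝ) ^ (-k) ∧ ∀ i, Q.corner i = (2:ℝ) ^ (-k) * (m i : ℝ)

/-- The subcube of `Q` of dyadic generation `k` in position `m`. -/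
def subCube (Q : Cube N) (k : ℕ) (m : Fin N → ℕ) : Cube N where
  corner := fun i => Q.corner i + Q.side * (m i : ℝ) / 2 ^ k
  side := Q.side / 2 ^ k
  side_pos := div_pos Q.side_pos (by positivity)

/-- `R` is a dyadic subcube of `Q` (relative dyadic lattice `D(Q)`, including `Q` itself). -/
def IsDyadicSub (Q R : Cube N) : Prop :=
  ∃ (k : ℕ) (m : Fin N → ℕ), (∀ i, m i < 2 ^ k) ∧ R = Q.subCube k m

end Cube

variable {N d : ℕ}

/-- The dyadic lattice, as a set of cubes. -/
def dyadicCubes (N : ℕ) : Set (Cube N) := {Q | Q.IsDyadic}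

/-- All cubes in `ℝ^N`. -/
def allCubes (N : ℕ) : Set (Cube N) := Set.univ

/-- The average `⟨g⟩_Q = |Q|⁻¹ ∫_Q g`. -/
def avg (Q : Cube N) (g : (Fin N → ℝ) → ℝ) : ℝ :=
  (Q.vol)⁻¹ * ∫ y in Q.set, g y

/-- The entrywise average `⟨W⟩_Q` of a matrix-valued function. -/
def matAvg (Q : Cube N) (W : (Fin N → ℝ) → Matrix (Fin d) (Fin d) ℝ) :
    Matrix (Fin d) (Fin d) ℝ :=
  Matrix.of fun i j => avg Q fun x => W x i j

/-- The positive semidefinite square root of a matrix (junk value `0` off psd matrices). -/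
def msqrt (A : Matrix (Fin d) (Fin d) ℝ) : Matrix (Fin d) (Fin d) ℝ :=
  letI := Classical.dec A.PosSemidef
  if h : A.PosSemidef then
    (h.1.eigenvectorUnitary : Matrix (Fin d) (Fin d) ℝ) *
      Matrix.diagonal (RCLike.ofReal ∘ Real.sqrt ∘ h.1.eigenvalues) *
      (star h.1.eigenvectorUnitary : Matrix (Fin d) (Fin d) ℝ)
  else 0

/-- The `ℓ² → ℓ²` operator norm of a `d × d` matrix. -/
def matOpNorm (A : Matrix (Fin d) (Fin d) ℝ) : ℝ :=
  sSup {t | ∃ v : Fin d → ℝ, vnorm v ≤ 1 ∧ t = vnorm (A.mulVec v)}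

/-- A `d`-dimensional matrix weight: locally integrable, positive semidefinite values. -/
def IsMatrixWeight (W : (Fin N → ℝ) → Matrix (Fin d) (Fin d) ℝ) : Prop :=
  (∀ x, (W x).PosSemidef) ∧ ∀ i j, LocallyIntegrable (fun x => W x i j) volume

/-- A scalar weight: nonnegative and locally integrable. -/
def IsScalarWeight (w : (Fin N → ℝ) → ℝ) : Prop :=
  (∀ x, 0 ≤ w x) ∧ LocallyIntegrable w volume

/-- The maximal function adapted to the cube `Q`:
`M_Q w(x) = sup {⟨w⟩_R : R ∈ D(Q), x ∈ R}` (and `0` off `Q`). -/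
def MQ (Q : Cube N) (w : (Fin N → ℝ) → ℝ) (x : Fin N → ℝ) : ℝ :=
  sSup ({0} ∪ {t | ∃ R : Cube N, Q.IsDyadicSub R ∧ x ∈ R.set ∧ t = avg R w})

/-- Admissible `A∞` constants of a scalar weight, over a collection `𝒬` of cubes. -/
def AinftyOn (𝒬 : Set (Cube N)) (w : (Fin N → ℝ) → ℝ) : Set ℝ :=
  {C | 0 ≤ C ∧ ∀ Q ∈ 𝒬, avg Q (MQ Q w) ≤ C * avg Q w}

/-- The `A∞` characteristic (best admissible constant) of a scalar weight. -/
def AinftyChar (𝒬 : Set (Cube N)) (w : (Fin N → ℝ) → ℝ) : ℝ := sInf (AinftyOn 𝒬 w)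

/-- The scalar weight `w_e(x) = (W(x)e, e)` associated to a matrix weight and `e ∈ ℝ^d`. -/
def we (W : (Fin N → ℝ) → Matrix (Fin d) (Fin d) ℝ) (e : Fin d → ℝ) :
    (Fin N → ℝ) → ℝ := fun x => e ⬝ᵥ (W x).mulVec e

/-- Admissible constants for the scalar `A∞` characteristic of a matrix weight. -/
def matAinftyScOn (𝒬 : Set (Cube N)) (W : (Fin N → ℝ) → Matrix (Fin d) (Fin d) ℝ) : Set ℝ :=
  {C | 0 ≤ C ∧ ∀ e : Fin d → ℝ, ∀ Q ∈ 𝒬, avg Q (MQ Q (we W e)) ≤ C * avg Q (we W e)}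

/-- The scalar `A∞` characteristic `[W]^{sc}_{A∞} = sup_e [w_e]_{A∞}` of a matrix weight. -/
def matAinftyScChar (𝒬 : Set (Cube N)) (W : (Fin N → ℝ) → Matrix (Fin d) (Fin d) ℝ) : ℝ :=
  sInf (matAinftyScOn 𝒬 W)

/-- Admissible constants for the two-weight matrix `A₂` characteristic
`[W,V]_{A₂} = sup_Q ‖⟨W⟩_Q^{1/2} ⟨V⟩_Q^{1/2}‖²`. -/
def A2pairOn (𝒬 : Set (Cube N)) (W V : (Fin N → ℝ) → Matrix (Fin d) (Fin d) ℝ) : Set ℝ :=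
  {C | ∀ Q ∈ 𝒬, matOpNorm (msqrt (matAvg Q W) * msqrt (matAvg Q V)) ^ 2 ≤ C}

/-- The two-weight matrix `A₂` characteristic. -/
def A2pairChar (𝒬 : Set (Cube N)) (W V : (Fin N → ℝ) → Matrix (Fin d) (Fin d) ℝ) : ℝ :=
  sInf (A2pairOn 𝒬 W V)

/-- Admissible constants for the scalar `A₂` characteristic `sup_Q ⟨w⟩_Q ⟨w⁻¹⟩_Q`. -/
def scalarA2On (𝒬 : Set (Cube N)) (w : (Fin N → ℝ) → ℝ) : Set ℝ :=
  {C | ∀ Q ∈ 𝒬, avg Q w * avg Q (fun x => (w x)⁻¹) ≤ C}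

/-- The scalar `A₂` characteristic. -/
def scalarA2Char (𝒬 : Set (Cube N)) (w : (Fin N → ℝ) → ℝ) : ℝ := sInf (scalarA2On 𝒬 w)

/-- An `ω`-Calderón–Zygmund operator on `ℝ^N`: a linear operator, bounded on `L²`,
with a kernel representation off the support, whose kernel satisfies the standard size
condition and the `ω`-smoothness condition, `ω` being a modulus of continuity. -/
structure CZO (N : ℕ) where
  op : ((Fin N → ℝ) → ℝ) →ₗ[ℝ] ((Fin N → ℝ) → ℝ)
  K : (Fin N → ℝ) → (Fin N → ℝ) → ℝ
  ω : ℝ → ℝ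
  CK : ℝ
  normBound : ℝ
  bounded : ∀ f : (Fin N → ℝ) → ℝ, MemLp f 2 volume →
    MemLp (op f) 2 volume ∧
      eLpNorm (op f) 2 volume ≤ ENNReal.ofReal normBound * eLpNorm f 2 volume
  repr : ∀ f : (Fin N → ℝ) → ℝ, MemLp f 2 volume → ∀ x ∉ tsupport f,
    op f x = ∫ y, K x y * f y
  size : ∀ x y : Fin N → ℝ, x ≠ y → |K x y| ≤ CK / vnorm (x - y) ^ N
  smooth : ∀ x x' y : Fin N → ℝ, x ≠ y → vnorm (x - x') ≤ vnorm (x - y) / 2 →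
    |K x y - K x' y| + |K y x - K y x'| ≤
      ω (vnorm (x - x') / vnorm (x - y)) / vnorm (x - y) ^ N
  omega_zero : ω 0 = 0
  omega_mono : MonotoneOn ω (Set.Ici 0)
  omega_subadd : ∀ s t : ℝ, 0 ≤ s → 0 ≤ t → ω (s + t) ≤ ω s + ω t

/-- The Dini condition `∫₀¹ ω(t) dt/t < ∞` for a modulus of continuity. -/
def Dini (ω : ℝ → ℝ) : Prop :=
  IntegrableOn (fun t => ω t / t) (Set.Ioc (0:ℝ) 1) volume

/-- Componentwise (i.e. `T ⊗ I_d`) action of a scalar operator on vector-valued functions. -/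
def vecApply (T : ((Fin N → ℝ) → ℝ) → ((Fin N → ℝ) → ℝ))
    (f : (Fin N → ℝ) → Fin d → ℝ) : (Fin N → ℝ) → Fin d → ℝ :=
  fun x i => T (fun y => f y i) x

/-- `T` maps `L²` to `L²` with operator norm at most `M`. -/
def L2OpNormLe (T : ((Fin N → ℝ) → ℝ) → ((Fin N → ℝ) → ℝ)) (M : ℝ) : Prop :=
  ∀ f : (Fin N → ℝ) → ℝ, MemLp f 2 volume →
    MemLp (T f) 2 volume ∧ eLpNorm (T f) 2 volume ≤ ENNReal.ofReal M * eLpNorm f 2 volume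

/-- `T` is bounded on `L²`. -/
def L2Bounded (T : ((Fin N → ℝ) → ℝ) → ((Fin N → ℝ) → ℝ)) : Prop :=
  ∃ M : ℝ, L2OpNormLe T M

/-- The family of kernels of a (generalized big) Haar shift of complexity `r`:
`K_Q` is supported on `Q × Q`, bounded by `|Q|⁻¹`, constant on products of
`(r+1)`-st generation dyadic subcubes of `Q`, and vanishes for non-dyadic `Q`. -/
structure HaarShiftKernel (N : ℕ) (r : ℕ) where
  K : Cube N → (Fin N → ℝ) → (Fin N → ℝ) → ℝ
  measK : ∀ Q : Cube N, Measurable (Function.uncurry (K Q))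
  suppK : ∀ Q : Cube N, ∀ x y, K Q x y ≠ 0 → x ∈ Q.set ∧ y ∈ Q.set
  bddK : ∀ Q : Cube N, ∀ x y, |K Q x y| ≤ (Cube.vol Q)⁻¹
  constK : ∀ Q : Cube N, ∀ m m' : Fin N → ℕ,
    (∀ i, m i < 2 ^ (r + 1)) → (∀ i, m' i < 2 ^ (r + 1)) →
    ∀ x x' y y', x ∈ (Q.subCube (r + 1) m).set → x' ∈ (Q.subCube (r + 1) m).set →
      y ∈ (Q.subCube (r + 1) m').set → y' ∈ (Q.subCube (r + 1) m').set →
      K Q x y = K Q x' y'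
  dyadicK : ∀ Q : Cube N, ¬Q.IsDyadic → K Q = 0

/-- The operator `𝕊 = Σ_{Q ∈ D} T_Q` associated to a family of Haar shift kernels. -/
def hsApply {r : ℕ} (S : HaarShiftKernel N r) (f : (Fin N → ℝ) → ℝ) : (Fin N → ℝ) → ℝ :=
  fun x => ∑' Q : Cube N, ∫ y, S.K Q x y * f y

/-- The cancellation conditions `T_Q 1_Q = 0`, `T_Q^* 1_Q = 0` making a generalized
big Haar shift a big Haar shift. -/
def IsBigShift {r : ℕ} (S : HaarShiftKernel N r) : Prop :=
  (∀ Q : Cube N, ∀ x, (∫ y, S.K Q x y) = 0) ∧ (∀ Q : Cube N, ∀ y, (∫ x, S.K Q x y) = 0)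

/-- The sublattice `D̃ = ∪_j D_{k+(r+1)j}` of the dyadic lattice. -/
def Dtilde (N r k : ℕ) : Set (Cube N) :=
  {Q | Q.IsDyadic ∧ ∃ j : ℤ, Q.side = (2:ℝ) ^ (-((k : ℤ) + (r + 1) * j))}

/-- The Haar shift is `r`-separated with lattice parameter `k`:
`T_Q ≠ 0` only for `Q ∈ D̃`. -/
def SeparatedKernel {r : ℕ} (S : HaarShiftKernel N r) (k : ℕ) : Prop :=
  ∀ Q : Cube N, S.K Q ≠ 0 → Q ∈ Dtilde N r k

/-- The martingale difference `Δ_R b = Σ_{R' child of R} ⟨b⟩_{R'} 1_{R'} - ⟨b⟩_R 1_R`. -/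
def haarDelta (R : Cube N) (b : (Fin N → ℝ) → ℝ) (x : Fin N → ℝ) : ℝ :=
  (∑ m : Fin N → Fin 2, Set.indicator (R.subCube 1 fun i => (m i : ℕ)).set
      (fun _ => avg (R.subCube 1 fun i => (m i : ℕ)) b) x)
    - Set.indicator R.set (fun _ => avg R b) x

/-- The paraproduct of order `r` with symbol `b`:
`Π_b^r f = Σ_{Q ∈ D} ⟨f⟩_Q Σ_{R ∈ ch^r Q} Δ_R b`. -/
def paraApply (r : ℕ) (b f : (Fin N → ℝ) → ℝ) : (Fin N → ℝ) → ℝ :=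
  fun x => ∑' Q : dyadicCubes N,
    avg Q.val f * ∑ m : Fin N → Fin (2 ^ r), haarDelta (Q.val.subCube r fun i => (m i : ℕ)) b x

/-- The paraproduct `Π_b^r` is `r`-separated with lattice parameter `k`. -/
def SeparatedPara (r : ℕ) (b : (Fin N → ℝ) → ℝ) (k : ℕ) : Prop :=
  ∀ Q : Cube N, Q.IsDyadic →
    (∃ x, (∑ m : Fin N → Fin (2 ^ r), haarDelta (Q.subCube r fun i => (m i : ℕ)) b x) ≠ 0) →
    Q ∈ Dtilde N r k

/-- `T` is a big Haar shift of complexity `r`, or a paraproduct of order `r`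
with `L²` norm at most `2^{-Nr/2}`. -/
def IsShiftOrParaproduct (N r : ℕ) (T : ((Fin N → ℝ) → ℝ) → ((Fin N → ℝ) → ℝ)) : Prop :=
  (∃ S : HaarShiftKernel N r, IsBigShift S ∧ L2Bounded (hsApply S) ∧ T = hsApply S) ∨
  (∃ b : (Fin N → ℝ) → ℝ, LocallyIntegrable b volume ∧
      L2OpNormLe (paraApply r b) (Real.sqrt ((2:ℝ) ^ (N * r)))⁻¹ ∧ T = paraApply r b)

/-- `T` is an `r`-separated big Haar shift of complexity `r`, or an `r`-separated
paraproduct of order `r` with `L²` norm at most `2^{-Nr/2}`; `k ≤ r` is the lattice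
parameter of the separation sublattice `D̃`. -/
def IsSeparatedShiftOrParaproduct (N r k : ℕ)
    (T : ((Fin N → ℝ) → ℝ) → ((Fin N → ℝ) → ℝ)) : Prop :=
  k ≤ r ∧
  ((∃ S : HaarShiftKernel N r, IsBigShift S ∧ L2Bounded (hsApply S) ∧
      SeparatedKernel S k ∧ T = hsApply S) ∨
   (∃ b : (Fin N → ℝ) → ℝ, LocallyIntegrable b volume ∧
      L2OpNormLe (paraApply r b) (Real.sqrt ((2:ℝ) ^ (N * r)))⁻¹ ∧
      SeparatedPara r b k ∧ T = paraApply r b))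

/-- The convex-body average `⟨⟨f⟩⟩_Q = {⟨φ f⟩_Q : ‖φ‖_∞ ≤ 1}`. -/
def cbAvg (Q : Cube N) (f : (Fin N → ℝ) → Fin d → ℝ) : Set (Fin d → ℝ) :=
  {v | ∃ φ : (Fin N → ℝ) → ℝ, Measurable φ ∧ (∀ x, |φ x| ≤ 1) ∧
        v = fun i => avg Q fun x => φ x * f x i}

/-- A weakly `η`-sparse family of cubes: there are pairwise disjoint measurable
subsets `E_Q ⊆ Q` with `|E_Q| ≥ η |Q|`. -/
def WeaklySparse (S : Set (Cube N)) (η : ℝ) : Prop :=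
  ∃ E : Cube N → Set (Fin N → ℝ),
    (∀ Q ∈ S, E Q ⊆ Q.set ∧ MeasurableSet (E Q) ∧ ENNReal.ofReal (η * Q.vol) ≤ volume (E Q)) ∧
    S.PairwiseDisjoint E

/-- The value at `x` of the convex-body sparse operator
`𝐋_S f = Σ_{Q ∈ S} ⟨⟨f⟩⟩_Q 1_Q` (an infinite Minkowski sum): all convergent sums
`Σ_Q g(Q)` with `g(Q) ∈ ⟨⟨f⟩⟩_Q` whenever `Q ∈ S` contains `x`, and `g(Q) = 0` otherwise. -/
def sparseBody (S : Set (Cube N)) (f : (Fin N → ℝ) → Fin d → ℝ) (x : Fin N → ℝ) :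
    Set (Fin d → ℝ) :=
  {v | ∃ g : Cube N → Fin d → ℝ,
        (∀ Q : Cube N, Q ∈ S ∧ x ∈ Q.set → g Q ∈ cbAvg Q f) ∧
        (∀ Q : Cube N, ¬(Q ∈ S ∧ x ∈ Q.set) → g Q = 0) ∧ HasSum g v}

/-- The `S`-children of `Q`: maximal cubes of `S` strictly contained in `Q`. -/
def sChildren (S : Set (Cube N)) (Q : Cube N) : Set (Cube N) :=
  {R | R ∈ S ∧ R.set ⊂ Q.set ∧ ¬∃ R' ∈ S, R.set ⊂ R'.set ∧ R'.set ⊂ Q.set}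

/-- A classical `ε`-sparse family of dyadic cubes: `Σ_{R ∈ ch_S(Q)} |R| ≤ ε |Q|`. -/
def EpsSparse (S : Set (Cube N)) (ε : ℝ) : Prop :=
  (∀ Q ∈ S, Q.IsDyadic) ∧
  ∀ Q ∈ S, ∀ F : Finset (Cube N), ↑F ⊆ sChildren S Q → ∑ R ∈ F, R.vol ≤ ε * Q.vol

/-- A dyadic `λ`-Carleson family: `Σ_{R ∈ S, R ⊆ Q} |R| ≤ λ |Q|` for all `Q ∈ S`. -/
def DyadicCarleson (S : Set (Cube N)) (lam : ℝ) : Prop :=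
  (∀ Q ∈ S, Q.IsDyadic) ∧
  ∀ Q ∈ S, ∀ F : Finset (Cube N), (↑F ⊆ {R | R ∈ S ∧ R.set ⊆ Q.set}) →
    ∑ R ∈ F, R.vol ≤ lam * Q.vol

/-- A simple sparse family: every cube of `S` has at most one `S`-child. -/
def SimpleSparse (S : Set (Cube N)) : Prop :=
  (∀ Q ∈ S, Q.IsDyadic) ∧ ∀ Q ∈ S, (sChildren S Q).Subsingleton

end CBD

end

/-!
Convexity and symmetry hold at every point: each `⟨⟨f⟩⟩_Q` is convex and symmetric, and both
properties pass to the convergent sums defining `𝐋_S f(x)`. Every element of `⟨⟨f⟩⟩_Q` has norm at most `⟨|f|⟩_Q`, so boundedness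
follows once `Σ_{Q ∈ S} ⟨|f|⟩_Q 1_Q(x) < ∞` for a.e. `x`. Weak sparseness gives
`η Σ_Q c_Q |Q| ≤ Σ_Q c_Q |E_Q| ≤ ∫ w` whenever `c_Q ≤ w` on `Q`. A cube of volume at most `1`
that meets `supp f` lies in a fixed ball `U`, so taking `w = 1_U` the volumes of these cubes are
summable and, by Borel–Cantelli, a.e. `x` lies in only finitely many of them. A cube of volume
greater than `1` containing `x` satisfies `|Q|⁻² ≤ 2^{2N} (1 + |y - x|)^{-2N}` for `y ∈ Q`, and
this weight is integrable, so `Σ_{Q ∋ x} |Q|⁻¹ < ∞` over such cubes.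
-/

lemma pi_enorm_le_iff {ι : Type*} [Fintype ι] {E : ι → Type*} [∀ i, SeminormedAddGroup (E i)]
    {v : ∀ i, E i} {c : ℝ≥0∞} : ‖v‖ₑ ≤ c ↔ ∀ i, ‖v i‖ₑ ≤ c := by
  simp only [enorm_eq_nnnorm, Pi.nnnorm_def, ENNReal.coe_finset_sup, Finset.sup_le_iff,
    Finset.mem_univ, true_imp_iff]

namespace CBD

variable {N d : ℕ}

namespace Cube

variable (Q : Cube N) {x y : Fin N → ℝ}

lemma set_eq_pi : Q.set = Set.pi univ fun i => Ico (Q.corner i) (Q.corner i + Q.side) := by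
  ext x
  simp [Cube.set]

lemma measurableSet_set : MeasurableSet Q.set := by
  rw [set_eq_pi]
  exact MeasurableSet.univ_pi fun _ => measurableSet_Ico

lemma vol_pos : 0 < Q.vol := pow_pos Q.side_pos N

lemma volume_set : volume Q.set = ENNReal.ofReal Q.vol := by
  rw [set_eq_pi, volume_pi_pi]
  simp [Cube.vol, ENNReal.ofReal_pow Q.side_pos.le]

lemma volume_set_ne_zero : volume Q.set ≠ 0 := by
  simpa [volume_set] using Q.vol_pos

lemma volume_set_ne_top : volume Q.set ≠ ∞ := by
  simp [volume_set]

variable {Q}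

lemma norm_sub_le_side (hx : x ∈ Q.set) (hy : y ∈ Q.set) : ‖x - y‖ ≤ Q.side := by
  refine (pi_norm_le_iff_of_nonneg Q.side_pos.le).2 fun i => ?_
  rw [Pi.sub_apply, Real.norm_eq_abs, abs_le]
  constructor <;> linarith [hx i, hy i]

lemma set_subset_closedBall_of_vol_le_one (hQ : Q.vol ≤ 1) (hx : x ∈ Q.set) :
    Q.set ⊆ Metric.closedBall x 1 := by
  intro y hy
  rw [Metric.mem_closedBall, dist_eq_norm]
  rcases N.eq_zero_or_pos with rfl | hN
  · rw [Subsingleton.elim y x, sub_self, norm_zero]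
    exact zero_le_one
  · exact (norm_sub_le_side hy hx).trans
      ((pow_le_one_iff_of_nonneg Q.side_pos.le hN.ne').1 hQ)

lemma set_subset_closedBall_of_setLAverage_ne_zero {g : (Fin N → ℝ) → ℝ≥0∞} {R : ℝ}
    (hg : Function.support g ⊆ Metric.closedBall 0 R) (hQ : Q.vol ≤ 1)
    (hQg : ⨍⁻ y in Q.set, g y ∂volume ≠ 0) : Q.set ⊆ Metric.closedBall 0 (R + 1) := by
  obtain ⟨z, hzQ, hz⟩ : ∃ z ∈ Q.set, g z ≠ 0 := by
    by_contra! h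
    exact hQg ((setLAverage_congr_fun Q.measurableSet_set h).trans (laverage_zero _))
  have hzR : dist z 0 ≤ R := hg hz
  exact (set_subset_closedBall_of_vol_le_one hQ hzQ).trans
    (Metric.closedBall_subset_closedBall' (by linarith))

lemma one_le_side_of_one_lt_vol (hQ : 1 < Q.vol) : 1 ≤ Q.side := by
  by_contra! h
  exact (pow_le_one₀ Q.side_pos.le h.le).not_gt hQ

lemma inv_vol_sq_le (hQ : 1 ≤ Q.side) (hx : x ∈ Q.set) (hy : y ∈ Q.set) :
    (Q.vol ^ 2)⁻¹ ≤ 2 ^ (2 * N) * (1 + ‖y - x‖) ^ (-(2 * N : ℝ)) := by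
  have hyx : 1 + ‖y - x‖ ≤ 2 * Q.side := by linarith [norm_sub_le_side hy hx]
  have hpow : (1 + ‖y - x‖) ^ (2 * N) ≤ 2 ^ (2 * N) * Q.vol ^ 2 := by
    calc (1 + ‖y - x‖) ^ (2 * N) ≤ (2 * Q.side) ^ (2 * N) := by gcongr
      _ = 2 ^ (2 * N) * Q.vol ^ 2 := by rw [Cube.vol, mul_pow, ← pow_mul, mul_comm N]
  rw [Real.rpow_neg (by positivity), show (2 * N : ℝ) = ((2 * N : ℕ) : ℝ) by push_cast; ring,
    Real.rpow_natCast, ← div_eq_mul_inv, le_div_iff₀ (by positivity), inv_mul_le_iff₀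
    (by have := Q.vol_pos; positivity)]
  linarith

end Cube

section ConvexBody

variable {f : (Fin N → ℝ) → Fin d → ℝ} {Q : Cube N} {v : Fin d → ℝ}

lemma integrableOn_mul_apply (hf : Integrable f) {φ : (Fin N → ℝ) → ℝ} (hφm : Measurable φ)
    (hφ : ∀ x, |φ x| ≤ 1) (i : Fin d) (s : Set (Fin N → ℝ)) :
    IntegrableOn (fun y => φ y * f y i) s :=
  ((hf.eval i).bdd_mul hφm.aestronglyMeasurable (ae_of_all _ hφ)).integrableOn

lemma enorm_le_setLAverage_of_mem_cbAvg (hv : v ∈ cbAvg Q f) :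
    ‖v‖ₑ ≤ ⨍⁻ y in Q.set, ‖f y‖ₑ ∂volume := by
  obtain ⟨φ, -, hφ, rfl⟩ := hv
  have hvol : ‖Q.vol⁻¹‖ₑ = (volume Q.set)⁻¹ := by
    rw [Real.enorm_of_nonneg (inv_nonneg.2 Q.vol_pos.le), ENNReal.ofReal_inv_of_pos Q.vol_pos,
      Q.volume_set]
  refine pi_enorm_le_iff.2 fun i => ?_
  calc ‖avg Q fun y => φ y * f y i‖ₑ = (volume Q.set)⁻¹ * ‖∫ y in Q.set, φ y * f y i‖ₑ := by
        rw [avg, enorm_mul, hvol]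
    _ ≤ (volume Q.set)⁻¹ * ∫⁻ y in Q.set, ‖φ y‖ₑ * ‖f y i‖ₑ := by
        simp_rw [← enorm_mul]
        gcongr
        exact enorm_integral_le_lintegral_enorm _
    _ ≤ (volume Q.set)⁻¹ * ∫⁻ y in Q.set, 1 * ‖f y‖ₑ := by
        gcongr with y
        · rw [Real.enorm_eq_ofReal_abs]
          exact ENNReal.ofReal_le_one.2 (hφ y)
        · exact pi_enorm_le_iff.1 le_rfl i
    _ = ⨍⁻ y in Q.set, ‖f y‖ₑ ∂volume := by
        simp_rw [one_mul, setLAverage_eq, ENNReal.div_eq_inv_mul]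

lemma convex_cbAvg (hf : Integrable f) : Convex ℝ (cbAvg Q f) := by
  rintro _ ⟨φ, hφm, hφ, rfl⟩ _ ⟨ψ, hψm, hψ, rfl⟩ a b ha hb hab
  refine ⟨fun x => a * φ x + b * ψ x, by fun_prop, fun x => ?_, funext fun i => ?_⟩
  · rw [abs_le]
    constructor <;> nlinarith [abs_le.1 (hφ x), abs_le.1 (hψ x)]
  · have hφi := integrableOn_mul_apply hf hφm hφ i Q.set
    have hψi := integrableOn_mul_apply hf hψm hψ i Q.set
    simp only [Pi.add_apply, Pi.smul_apply, smul_eq_mul, avg, add_mul, mul_assoc,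
      integral_add (hφi.const_mul a) (hψi.const_mul b), integral_const_mul]
    ring

lemma neg_mem_cbAvg (hv : v ∈ cbAvg Q f) : -v ∈ cbAvg Q f := by
  obtain ⟨φ, hφm, hφ, rfl⟩ := hv
  refine ⟨fun x => -φ x, hφm.neg, fun x => by simpa using hφ x, funext fun i => ?_⟩
  simp only [Pi.neg_apply, avg, neg_mul, integral_neg, mul_neg]

end ConvexBody

section SparseBody

variable {S : Set (Cube N)} {f : (Fin N → ℝ) → Fin d → ℝ} {x : Fin N → ℝ} {v : Fin d → ℝ}

lemma convex_sparseBody (hf : Integrable f) : Convex ℝ (sparseBody S f x) := by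
  rintro _ ⟨g, hgmem, hgzero, hg⟩ _ ⟨h, hhmem, hhzero, hh⟩ a b ha hb hab
  exact ⟨fun Q => a • g Q + b • h Q,
    fun Q hQ => convex_cbAvg hf (hgmem Q hQ) (hhmem Q hQ) ha hb hab,
    fun Q hQ => by simp [hgzero Q hQ, hhzero Q hQ], (hg.const_smul a).add (hh.const_smul b)⟩

lemma neg_mem_sparseBody (hv : v ∈ sparseBody S f x) : -v ∈ sparseBody S f x := by
  obtain ⟨g, hgmem, hgzero, hg⟩ := hv
  exact ⟨fun Q => -g Q, fun Q hQ => neg_mem_cbAvg (hgmem Q hQ),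
    fun Q hQ => by simp [hgzero Q hQ], hg.neg⟩

noncomputable def scalarSparse (S : Set (Cube N)) (g : (Fin N → ℝ) → ℝ≥0∞) (x : Fin N → ℝ) :
    ℝ≥0∞ :=
  ∑' Q : {Q | Q ∈ S ∧ x ∈ Q.set}, ⨍⁻ y in Q.1.set, g y ∂volume

lemma enorm_le_scalarSparse (hv : v ∈ sparseBody S f x) :
    ‖v‖ₑ ≤ scalarSparse S (fun y => ‖f y‖ₑ) x := by
  obtain ⟨g, hgmem, hgzero, hg⟩ := hv
  rw [scalarSparse, tsum_subtype _ fun Q : Cube N => ⨍⁻ y in Q.set, ‖f y‖ₑ ∂volume]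
  refine hg.enorm_le_of_bounded ENNReal.summable.hasSum fun Q => ?_
  by_cases hQ : Q ∈ S ∧ x ∈ Q.set
  · rw [indicator_of_mem (show Q ∈ {Q | Q ∈ S ∧ x ∈ Q.set} from hQ)]
    exact enorm_le_setLAverage_of_mem_cbAvg (hgmem Q hQ)
  · simp [hgzero Q hQ]

lemma isBounded_sparseBody (hx : scalarSparse S (fun y => ‖f y‖ₑ) x ≠ ∞) :
    Bornology.IsBounded (sparseBody S f x) :=
  isBounded_iff_forall_norm_le.2 ⟨_, fun v hv =>
    toReal_enorm v ▸ ENNReal.toReal_mono hx (enorm_le_scalarSparse hv)⟩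

end SparseBody

namespace WeaklySparse

variable {S : Set (Cube N)} {η : ℝ}

lemma countable (hη : 0 < η) (hS : WeaklySparse S η) : S.Countable := by
  obtain ⟨E, hE, hdisj⟩ := hS
  have hpos := Measure.countable_meas_pos_of_disjoint_iUnion (μ := volume)
    (As := fun Q : S => E Q) (fun Q => (hE Q Q.2).2.1)
    fun Q Q' hne => hdisj Q.2 Q'.2 (Subtype.coe_injective.ne hne)
  rw [← Set.countable_coe_iff, ← Set.countable_univ_iff]
  exact hpos.mono fun Q _ =>
    (ENNReal.ofReal_pos.2 (mul_pos hη Q.1.vol_pos)).trans_le (hE Q Q.2).2.2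

lemma ofReal_mul_tsum_le_lintegral (hS : WeaklySparse S η) {T : Set (Cube N)} (hT : T ⊆ S)
    (c : Cube N → ℝ≥0∞) (w : (Fin N → ℝ) → ℝ≥0∞) (hcw : ∀ Q ∈ T, ∀ y ∈ Q.set, c Q ≤ w y) :
    ENNReal.ofReal η * ∑' Q : T, c Q * volume Q.1.set ≤ ∫⁻ y, w y := by
  obtain ⟨E, hE, hdisj⟩ := hS
  have hcube (Q : T) : c Q * (ENNReal.ofReal η * volume Q.1.set) ≤ ∫⁻ y in E Q, w y := by
    obtain ⟨hEQ, hEm, hEvol⟩ := hE Q (hT Q.2)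
    rw [Q.1.volume_set, ← ENNReal.ofReal_mul' Q.1.vol_pos.le]
    calc c Q * ENNReal.ofReal (η * Q.1.vol) ≤ ∫⁻ _ in E Q, c Q := by
          rw [setLIntegral_const]
          gcongr
      _ ≤ ∫⁻ y in E Q, w y := setLIntegral_mono' hEm fun y hy => hcw Q Q.2 y (hEQ hy)
  calc ENNReal.ofReal η * ∑' Q : T, c Q * volume Q.1.set
      = ∑' Q : T, c Q * (ENNReal.ofReal η * volume Q.1.set) := by
        rw [← ENNReal.tsum_mul_left]
        exact tsum_congr fun Q => mul_left_comm _ _ _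
    _ ≤ ∑' Q : T, volume.withDensity w (E Q) := by
        gcongr with Q
        rw [withDensity_apply _ (hE Q (hT Q.2)).2.1]
        exact hcube Q
    _ ≤ volume.withDensity w (⋃ Q : T, E Q) :=
        tsum_meas_le_meas_iUnion_of_disjoint _ (fun Q => (hE Q (hT Q.2)).2.1)
          fun Q Q' hne => hdisj (hT Q.2) (hT Q'.2) (Subtype.coe_injective.ne hne)
    _ ≤ ∫⁻ y, w y := by
        rw [← setLIntegral_univ, ← withDensity_apply _ MeasurableSet.univ]
        exact measure_mono (subset_univ _)

lemma ae_finite_setOf_mem (hη : 0 < η) (hS : WeaklySparse S η) {U : Set (Fin N → ℝ)}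
    (hU : volume U ≠ ∞) : ∀ᵐ x, {Q | Q ∈ S ∧ Q.set ⊆ U ∧ x ∈ Q.set}.Finite := by
  set T := {Q | Q ∈ S ∧ Q.set ⊆ U}
  have : Countable T := ((hS.countable hη).mono (sep_subset _ _)).to_subtype
  have hsum : ∑' Q : T, volume Q.1.set ≠ ∞ := by
    have hle := hS.ofReal_mul_tsum_le_lintegral (T := T) (sep_subset _ _) 1 (U.indicator 1)
      fun Q hQ y hy => by simp [hQ.2 hy]
    simp only [Pi.one_apply, one_mul] at hle
    exact (ENNReal.lt_top_of_mul_ne_top_right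
      (ne_top_of_le_ne_top hU (hle.trans (lintegral_indicator_one_le U)))
      (ENNReal.ofReal_pos.2 hη).ne').ne
  filter_upwards [ae_finite_setOfPred_mem hsum] with x hx
  convert hx.image Subtype.val using 1
  ext Q
  simp only [T, mem_ofPred_eq, mem_image, Subtype.exists, exists_and_right, exists_eq_right]
  tauto

lemma tsum_inv_volume_ne_top (hη : 0 < η) (hS : WeaklySparse S η) (x : Fin N → ℝ) :
    ∑' Q : {Q | Q ∈ S ∧ 1 < Q.vol ∧ x ∈ Q.set}, (volume Q.1.set)⁻¹ ≠ ∞ := by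
  rcases N.eq_zero_or_pos with rfl | hN
  · simp [Cube.vol]
  set w : (Fin N → ℝ) → ℝ≥0∞ :=
    fun y => ENNReal.ofReal (2 ^ (2 * N) * (1 + ‖y - x‖) ^ (-(2 * N : ℝ)))
  have hw : ∫⁻ y, w y ≠ ∞ := by
    have hr : (Module.finrank ℝ (Fin N → ℝ) : ℝ) < 2 * N := by
      rw [Module.finrank_fin_fun]
      exact_mod_cast (by omega : N < 2 * N)
    simp only [w, ENNReal.ofReal_mul (by positivity : (0 : ℝ) ≤ 2 ^ (2 * N))]
    rw [lintegral_const_mul' _ _ ENNReal.ofReal_ne_top,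
      lintegral_sub_right_eq_self (fun y => ENNReal.ofReal ((1 + ‖y‖) ^ (-(2 * N : ℝ)))) x]
    exact ENNReal.mul_ne_top ENNReal.ofReal_ne_top (finite_integral_one_add_norm hr).ne
  have hle := hS.ofReal_mul_tsum_le_lintegral
    (T := {Q | Q ∈ S ∧ 1 < Q.vol ∧ x ∈ Q.set}) (sep_subset _ _) (fun Q => (volume Q.set)⁻¹ ^ 2) w
    fun Q hQ y hy => by
      rw [Q.volume_set, ← ENNReal.ofReal_inv_of_pos Q.vol_pos, ← ENNReal.ofReal_pow
        (inv_nonneg.2 Q.vol_pos.le), inv_pow]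
      exact ENNReal.ofReal_le_ofReal
        (Cube.inv_vol_sq_le (Cube.one_le_side_of_one_lt_vol hQ.2.1) hQ.2.2 hy)
  have hcancel (Q : Cube N) : (volume Q.set)⁻¹ ^ 2 * volume Q.set = (volume Q.set)⁻¹ := by
    rw [sq, mul_assoc, ENNReal.inv_mul_cancel Q.volume_set_ne_zero Q.volume_set_ne_top, mul_one]
  simp only [hcancel] at hle
  exact (ENNReal.lt_top_of_mul_ne_top_right (ne_top_of_le_ne_top hw hle)
    (ENNReal.ofReal_pos.2 hη).ne').ne

lemma ae_scalarSparse_ne_top (hη : 0 < η) (hS : WeaklySparse S η) {g : (Fin N → ℝ) → ℝ≥0∞}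
    (hg : ∫⁻ y, g y ≠ ∞) (hsupp : Bornology.IsBounded (Function.support g)) :
    ∀ᵐ x, scalarSparse S g x ≠ ∞ := by
  obtain ⟨R, hR⟩ := hsupp.subset_closedBall 0
  set U := Metric.closedBall (0 : Fin N → ℝ) (R + 1)
  filter_upwards [hS.ae_finite_setOf_mem hη measure_closedBall_lt_top.ne] with x hsmall
  set small := {Q | Q ∈ S ∧ Q.set ⊆ U ∧ x ∈ Q.set}
  set big := {Q | Q ∈ S ∧ 1 < Q.vol ∧ x ∈ Q.set}
  set a : Cube N → ℝ≥0∞ := fun Q => ⨍⁻ y in Q.set, g y ∂volume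
  have ha_le (Q : Cube N) : a Q ≤ (volume Q.set)⁻¹ * ∫⁻ y, g y := by
    simp only [a, setLAverage_eq, ENNReal.div_eq_inv_mul]
    exact mul_le_mul_of_nonneg_left (setLIntegral_le_lintegral _ _) zero_le
  have hsupport : Function.support ({Q | Q ∈ S ∧ x ∈ Q.set}.indicator a) ⊆ small ∪ big := by
    rw [Set.support_indicator]
    rintro Q ⟨⟨hQS, hxQ⟩, haQ⟩
    rcases le_or_gt Q.vol 1 with hvol | hvol
    · exact Or.inl ⟨hQS, Q.set_subset_closedBall_of_setLAverage_ne_zero hR hvol haQ, hxQ⟩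
    · exact Or.inr ⟨hQS, hvol, hxQ⟩
  have hsplit : scalarSparse S g x ≤ ∑' Q : small, a Q + ∑' Q : big, a Q := calc
    scalarSparse S g x = ∑' Q : ↑(small ∪ big), {Q | Q ∈ S ∧ x ∈ Q.set}.indicator a Q := by
        rw [tsum_subtype_eq_of_support_subset hsupport]
        exact tsum_subtype _ a
    _ ≤ ∑' Q : small, a Q + ∑' Q : big, a Q :=
        (ENNReal.tsum_union_le _ _ _).trans (add_le_add
          (ENNReal.tsum_le_tsum fun _ => indicator_le_self _ _ _)
          (ENNReal.tsum_le_tsum fun _ => indicator_le_self _ _ _))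
  refine ne_top_of_le_ne_top (ENNReal.add_ne_top.2 ⟨?_, ?_⟩) hsplit
  · have := hsmall.fintype
    rw [tsum_fintype]
    exact (ENNReal.sum_lt_top.2 fun (Q : small) _ => (ha_le Q).trans_lt
      (ENNReal.mul_lt_top (ENNReal.inv_lt_top.2 (pos_iff_ne_zero.2 (Q : Cube N).volume_set_ne_zero))
        hg.lt_top)).ne
  · exact ne_top_of_le_ne_top (ENNReal.mul_ne_top (hS.tsum_inv_volume_ne_top hη x) hg)
      ((ENNReal.tsum_le_tsum fun Q : big => ha_le Q).trans_eq ENNReal.tsum_mul_right)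

end WeaklySparse

theorem sparseBody_bounded_convex_symmetric_general
    (N d : ℕ) (η : ℝ) (hη : 0 < η)
    (S : Set (Cube N)) (hS : WeaklySparse S η)
    (f : (Fin N → ℝ) → Fin d → ℝ) (hf : Integrable f volume) (hsupp : HasCompactSupport f) :
    ∀ᵐ x ∂(volume : Measure (Fin N → ℝ)),
      Convex ℝ (sparseBody S f x) ∧
      (∀ v ∈ sparseBody S f x, -v ∈ sparseBody S f x) ∧
      Bornology.IsBounded (sparseBody S f x) := by
  have hbdd : Bornology.IsBounded (Function.support fun y => ‖f y‖ₑ) :=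
    hsupp.isCompact.isBounded.subset fun y hy => subset_tsupport f (by simpa using hy)
  filter_upwards [hS.ae_scalarSparse_ne_top hη hf.hasFiniteIntegral.ne hbdd] with x hx
  exact ⟨convex_sparseBody hf, fun v hv => neg_mem_sparseBody hv, isBounded_sparseBody hx⟩

/-- For a weakly sparse family `S` and compactly supported `f ∈ L¹`,
for a.e. `x` the set `𝐋_S f(x)` is a bounded convex symmetric subset of `ℝ^d`. -/
theorem sparseBody_bounded_convex_symmetric
    (N d : ℕ) (η : ℝ) (hη : 0 < η) (hη' : η < 1)
    (S : Set (Cube N)) (hS : WeaklySparse S η)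
    (f : (Fin N → ℝ) → Fin d → ℝ) (hf : Integrable f volume) (hsupp : HasCompactSupport f) :
    ∀ᵐ x ∂(volume : Measure (Fin N → ℝ)),
      Convex ℝ (sparseBody S f x) ∧
      (∀ v ∈ sparseBody S f x, -v ∈ sparseBody S f x) ∧
      Bornology.IsBounded (sparseBody S f x) :=
  sparseBody_bounded_convex_symmetric_general N d η hη S hS f hf hsupp

end CBD
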